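/- Suppose in addition: ‖E_σ‖ ≤ c_E for all σ < α; λ < ρ₀ < α; the map σ ↦ E_σ is twice continuously differentiable in operator norm on a neighborhood of [λ, ρ₀]; θ : ℝ → ℝ and u : ℝ → W_Γ are twice continuously differentiable on a neighborhood of [λ, ρ₀] with ‖u(σ)‖_Γ = 1, E_σ(u(σ)) ≠ 0, the eigenvalue equation s_σ(u(σ), w) = θ(σ)·(u(σ), w)_Γ for all w ∈ W_Γ, and the minimality property s_σ(w,w) ≥ θ(σ)·‖w‖_Γ² for all w ∈ W_Γ, all for σ in that neighborhood; θ(λ) = 0; and there is a spectral gap c_g > 0 such that for all σ ∈ [λ, ρ₀] and all w ∈ W_Γ with (w, u(σ))_Γ = 0 one has s_σ(w,w) − θ(σ)·‖w‖_Γ² ≥ c_g·‖w‖_Γ². Then for every ρ ∈ (λ, ρ₀], the Newton iterate ρ_N := ρ − θ(ρ)/θ'(ρ) satisfies ρ_N − λ ≤ (1/(α − ρ₀) + c_E²/c_g)·(ρ − λ)². -/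

import Mathlib

/-!
Write `x σ = E_σ (u σ)`. Differentiating the eigenvalue equation, every term containing `E'`
drops out because `E'` takes values in `V_I`, on which `a_σ(E_σ ·, ·)` vanishes; this gives
`θ' = -‖x‖²` and hence `θ'' = -2⟪x, x'⟫` with `x' = E' u + E u'`. Coercivity on `V_I` bounds
`⟪x, E' u⟫` by `‖x‖² / (α - ρ₀)`, and the spectral gap (note `u' ⊥ u`) bounds `⟪x, E u'⟫` by
`c_E² ‖x‖² / c_g`. Both are nonnegative, so `‖x‖²` increases and, with
`C = 1 / (α - ρ₀) + c_E² / c_g`, `θ'' ≥ -2 C ‖x ρ‖² = 2 C θ'(ρ)` on `[λ, ρ]`. A second-order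
Taylor bound of `θ` at `ρ`, evaluated at the root `λ`, is then the Newton estimate.
-/

open scoped RealInnerProductSpace Topology
open Filter Set

section RealAnalysis

variable {F : Type*} [NormedAddCommGroup F] [NormedSpace ℝ F]

theorem HasDerivAt.eq_zero_of_eventuallyEq_const {f : ℝ → F} {f' : F} {x : ℝ} {c : F}
    (hf : HasDerivAt f f' x) (h : f =ᶠ[𝓝 x] fun _ => c) : f' = 0 :=
  hf.unique ((hasDerivAt_const x c).congr_of_eventuallyEq h)

theorem HasDerivAt.mem_of_eventually_sub_mem {S : Submodule ℝ F} (hS : IsClosed (S : Set F))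
    {f : ℝ → F} {f' : F} {x : ℝ} (hf : HasDerivAt f f' x) (h : ∀ᶠ t in 𝓝 x, f t - f x ∈ S) :
    f' ∈ S := by
  refine hS.mem_of_tendsto (hasDerivAt_iff_tendsto_slope.1 hf) ?_
  filter_upwards [nhdsWithin_le_nhds h] with t ht
  rw [slope_def_module]
  exact S.smul_mem _ ht

theorem HasDerivAt.inner_eq_zero_of_norm_eventually_eq {G : Type*} [NormedAddCommGroup G]
    [InnerProductSpace ℝ G] {u : ℝ → G} {u₁ : G} {x c : ℝ} (hu : HasDerivAt u u₁ x)
    (h : ∀ᶠ t in 𝓝 x, ‖u t‖ = c) : ⟪u x, u₁⟫ = 0 := by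
  simpa using hu.norm_sq.eq_zero_of_eventuallyEq_const (h.mono fun t ht => congrArg (· ^ 2) ht)

theorem monotoneOn_Icc_of_hasDerivAt_nonneg {f f' : ℝ → ℝ} {a b : ℝ}
    (hf : ∀ t ∈ Icc a b, HasDerivAt f (f' t) t) (hf' : ∀ t ∈ Ioo a b, 0 ≤ f' t) :
    MonotoneOn f (Icc a b) :=
  monotoneOn_of_hasDerivWithinAt_nonneg (convex_Icc a b)
    (fun t ht => (hf t ht).continuousAt.continuousWithinAt)
    (by simpa only [interior_Icc] using
      fun t ht => (hf t (Ioo_subset_Icc_self ht)).hasDerivWithinAt)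
    (by simpa only [interior_Icc] using hf')

theorem tangent_add_sq_le_of_le_deriv2 {f f' f'' : ℝ → ℝ} {a b K : ℝ} (hab : a ≤ b)
    (hf : ∀ t ∈ Icc a b, HasDerivAt f (f' t) t) (hf' : ∀ t ∈ Icc a b, HasDerivAt f' (f'' t) t)
    (hK : ∀ t ∈ Icc a b, K ≤ f'' t) :
    f b + f' b * (a - b) + K / 2 * (a - b) ^ 2 ≤ f a := by
  have hslope : MonotoneOn (fun t => f' t - K * t) (Icc a b) :=
    monotoneOn_Icc_of_hasDerivAt_nonneg
      (fun t ht => ((hf' t ht).sub ((hasDerivAt_id t).const_mul K)).congr_deriv (by simp))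
      (fun t ht => sub_nonneg.2 (hK t (Ioo_subset_Icc_self ht)))
  have hφ : MonotoneOn (fun t => f' b * (t - b) + K / 2 * (t - b) ^ 2 - f t) (Icc a b) := by
    refine monotoneOn_Icc_of_hasDerivAt_nonneg (f' := fun t => f' b + K * (t - b) - f' t)
      (fun t ht => ?_) (fun t ht => ?_)
    · have hlin := ((hasDerivAt_id t).sub_const b).const_mul (f' b)
      have hsq := (((hasDerivAt_id t).sub_const b).pow 2).const_mul (K / 2)
      exact ((hlin.add hsq).sub (hf t ht)).congr_deriv (by simp only [id_eq]; ring)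
    · have := hslope (Ioo_subset_Icc_self ht) (right_mem_Icc.2 hab) ht.2.le
      simp only at this ⊢
      linarith
  have := hφ (left_mem_Icc.2 hab) (right_mem_Icc.2 hab) hab
  simp only at this
  linarith

theorem newton_step_sub_root_le {f f' f'' : ℝ → ℝ} {r ρ C : ℝ} (hrρ : r ≤ ρ)
    (hf : ∀ t ∈ Icc r ρ, HasDerivAt f (f' t) t) (hf' : ∀ t ∈ Icc r ρ, HasDerivAt f' (f'' t) t)
    (hroot : f r = 0) (hneg : f' ρ < 0) (hf'' : ∀ t ∈ Icc r ρ, 2 * C * f' ρ ≤ f'' t) :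
    ρ - f ρ / f' ρ - r ≤ C * (ρ - r) ^ 2 := by
  have htaylor := tangent_add_sq_le_of_le_deriv2 hrρ hf hf' hf''
  have : ρ - r - C * (ρ - r) ^ 2 ≤ f ρ / f' ρ := by
    rw [le_div_iff_of_neg hneg]
    linarith
  linarith

theorem newton_step_sub_root_le_of_deriv_eq_neg {f f' n m : ℝ → ℝ} {r ρ C : ℝ} (hrρ : r ≤ ρ)
    (hC : 0 ≤ C) (hf : ∀ t ∈ Icc r ρ, HasDerivAt f (f' t) t)
    (hf' : ∀ t ∈ Icc r ρ, f' =ᶠ[𝓝 t] fun s => -n s) (hn : ∀ t ∈ Icc r ρ, HasDerivAt n (2 * m t) t)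
    (hm : ∀ t ∈ Icc r ρ, 0 ≤ m t ∧ m t ≤ C * n t) (hroot : f r = 0) (hpos : 0 < n ρ) :
    ρ - f ρ / f' ρ - r ≤ C * (ρ - r) ^ 2 := by
  have hρ : ρ ∈ Icc r ρ := right_mem_Icc.2 hrρ
  have hf'ρ : f' ρ = -n ρ := (hf' ρ hρ).eq_of_nhds
  have hmono : MonotoneOn n (Icc r ρ) := monotoneOn_Icc_of_hasDerivAt_nonneg hn
    fun t ht => mul_nonneg zero_le_two (hm t (Ioo_subset_Icc_self ht)).1
  refine newton_step_sub_root_le hrρ hf (fun t ht => (hn t ht).neg.congr_of_eventuallyEq (hf' t ht))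
    hroot (by linarith) fun t ht => ?_
  have := mul_le_mul_of_nonneg_left (hmono ht hρ ht.2) hC
  rw [hf'ρ]
  linarith [(hm t ht).2]

theorem le_sq_div_of_mul_sq_le_of_le_mul {A X n c : ℝ} (hc : 0 < c) (hlow : c * n ^ 2 ≤ A)
    (hup : A ≤ X * n) : A ≤ X ^ 2 / c := by
  rw [le_div_iff₀ hc]
  nlinarith [sq_nonneg (X - c * n)]

end RealAnalysis

section ShiftedForm

variable {V : Type*} [NormedAddCommGroup V] [InnerProductSpace ℝ V] (a : V →L[ℝ] V →L[ℝ] ℝ)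

noncomputable def shiftedForm (σ : ℝ) (v w : V) : ℝ := a v w - σ * ⟪v, w⟫

variable {a}

theorem shiftedForm_comm (hsymm : ∀ v w, a v w = a w v) (σ : ℝ) (v w : V) :
    shiftedForm a σ v w = shiftedForm a σ w v := by
  rw [shiftedForm, shiftedForm, hsymm, real_inner_comm]

theorem shiftedForm_add_left (σ : ℝ) (v₁ v₂ w : V) :
    shiftedForm a σ (v₁ + v₂) w = shiftedForm a σ v₁ w + shiftedForm a σ v₂ w := by
  simp only [shiftedForm, map_add, add_apply, inner_add_left]
  ring

theorem shiftedForm_zero_right (σ : ℝ) (v : V) : shiftedForm a σ v 0 = 0 := by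
  simp [shiftedForm]

theorem hasDerivAt_shiftedForm {f g : ℝ → V} {f' g' : V} {x : ℝ} (hf : HasDerivAt f f' x)
    (hg : HasDerivAt g g' x) :
    HasDerivAt (fun t => shiftedForm a t (f t) (g t))
      (shiftedForm a x f' (g x) + shiftedForm a x (f x) g' - ⟪f x, g x⟫) x := by
  have hform := (a.hasFDerivAt.comp_hasDerivAt x hf).clm_apply hg
  have hinner := (hasDerivAt_id x).mul (hf.inner ℝ hg)
  refine (hform.sub hinner).congr_deriv ?_
  simp only [shiftedForm, Function.comp_apply, id_eq]
  ring

theorem inner_le_of_shiftedForm_self_eq {VI : Submodule ℝ V} {α σ : ℝ}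
    (hcoer : ∀ w ∈ VI, a w w ≥ α * ‖w‖ ^ 2) (hσ : σ < α) {x p : V} (hp : p ∈ VI)
    (hpx : shiftedForm a σ p p = ⟪x, p⟫) :
    0 ≤ ⟪x, p⟫ ∧ ⟪x, p⟫ ≤ ‖x‖ ^ 2 / (α - σ) := by
  have hlow : (α - σ) * ‖p‖ ^ 2 ≤ ⟪x, p⟫ := by
    have := hcoer p hp
    rw [← hpx, shiftedForm, real_inner_self_eq_norm_sq]
    linarith
  exact ⟨le_trans (mul_nonneg (sub_pos.2 hσ).le (sq_nonneg _)) hlow,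
    le_sq_div_of_mul_sq_le_of_le_mul (sub_pos.2 hσ) hlow (real_inner_le_norm x p)⟩

end ShiftedForm

section Extension

variable {V W : Type*} [NormedAddCommGroup V] [InnerProductSpace ℝ V] [NormedAddCommGroup W]
  [NormedSpace ℝ W] {a : V →L[ℝ] V →L[ℝ] ℝ} {VI : Submodule ℝ V} {E : ℝ → W →L[ℝ] V}
  {E₁ : W →L[ℝ] V} {σ : ℝ}

theorem HasDerivAt.apply_mem_of_eventually_sub_mem (hVI : IsClosed (VI : Set V))
    (hE : HasDerivAt E E₁ σ) (hdiff : ∀ᶠ t in 𝓝 σ, ∀ z, E t z - E σ z ∈ VI) (z : W) : E₁ z ∈ VI :=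
  HasDerivAt.mem_of_eventually_sub_mem hVI (by simpa using hE.clm_apply (hasDerivAt_const σ z))
    (hdiff.mono fun _ ht => ht z)

theorem shiftedForm_extension_deriv (hE : HasDerivAt E E₁ σ)
    (hext : ∀ᶠ t in 𝓝 σ, ∀ z, ∀ w ∈ VI, shiftedForm a t (E t z) w = 0) (z : W) {v : V}
    (hv : v ∈ VI) : shiftedForm a σ (E₁ z) v = ⟪E σ z, v⟫ := by
  have hEz : HasDerivAt (fun t => E t z) (E₁ z) σ := by
    simpa using hE.clm_apply (hasDerivAt_const σ z)
  have hzero := (hasDerivAt_shiftedForm hEz (hasDerivAt_const σ v)).eq_zero_of_eventuallyEq_const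
    (hext.mono fun t ht => ht z v hv)
  rwa [shiftedForm_zero_right, add_zero, sub_eq_zero] at hzero

end Extension

section Eigenpair

variable {V W : Type*} [NormedAddCommGroup V] [InnerProductSpace ℝ V] [NormedAddCommGroup W]
  [InnerProductSpace ℝ W] {a : V →L[ℝ] V →L[ℝ] ℝ} {σ : ℝ}

theorem shiftedForm_eigenvector_deriv (hsymm : ∀ v w, a v w = a w v) {VI : Submodule ℝ V}
    {E : ℝ → W →L[ℝ] V} {E₁ : W →L[ℝ] V} {u : ℝ → W} {θ : ℝ → ℝ} {u₁ : W} {θ₁ : ℝ}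
    (hE : HasDerivAt E E₁ σ) (hu : HasDerivAt u u₁ σ) (hθ : HasDerivAt θ θ₁ σ)
    (hext : ∀ z, ∀ w ∈ VI, shiftedForm a σ (E σ z) w = 0) (hE₁ : ∀ z, E₁ z ∈ VI)
    (heig : ∀ᶠ t in 𝓝 σ, ∀ w, shiftedForm a t (E t (u t)) (E t w) = θ t * ⟪u t, w⟫) (w : W) :
    shiftedForm a σ (E σ u₁) (E σ w) - ⟪E σ (u σ), E σ w⟫ = θ₁ * ⟪u σ, w⟫ + θ σ * ⟪u₁, w⟫ := by
  have hEw : HasDerivAt (fun t => E t w) (E₁ w) σ := by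
    simpa using hE.clm_apply (hasDerivAt_const σ w)
  have huw : HasDerivAt (fun t => ⟪u t, w⟫) ⟪u₁, w⟫ σ := by
    simpa using hu.inner ℝ (hasDerivAt_const σ w)
  have hzero := ((hasDerivAt_shiftedForm (hE.clm_apply hu) hEw).sub (hθ.mul huw))
    |>.eq_zero_of_eventuallyEq_const (c := 0) (heig.mono fun t ht => sub_eq_zero.2 (ht w))
  rw [shiftedForm_add_left, shiftedForm_comm hsymm σ (E₁ (u σ)), hext w _ (hE₁ _),
    hext (u σ) _ (hE₁ w)] at hzero
  linarith

variable {T : W →L[ℝ] V} {u u₁ : W} {θ θ₁ : ℝ}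

theorem eigenvalue_deriv_eq_neg_norm_sq (hsymm : ∀ v w, a v w = a w v)
    (heig : ∀ w, shiftedForm a σ (T u) (T w) = θ * ⟪u, w⟫)
    (heig₁ : ∀ w, shiftedForm a σ (T u₁) (T w) - ⟪T u, T w⟫ = θ₁ * ⟪u, w⟫ + θ * ⟪u₁, w⟫)
    (hu : ‖u‖ = 1) (huu₁ : ⟪u, u₁⟫ = 0) : θ₁ = -‖T u‖ ^ 2 := by
  have h := heig₁ u
  rw [shiftedForm_comm hsymm, heig, huu₁, real_inner_self_eq_norm_sq, real_inner_self_eq_norm_sq,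
    hu, real_inner_comm, huu₁] at h
  linarith

theorem inner_le_of_spectral_gap {cE cg : ℝ} (hcg : 0 < cg) (hT : ‖T‖ ≤ cE)
    (hgap : ∀ w, ⟪w, u⟫ = 0 →
      shiftedForm a σ (T w) (T w) - θ * ‖w‖ ^ 2 ≥ cg * ‖w‖ ^ 2)
    (heig₁ : ∀ w, shiftedForm a σ (T u₁) (T w) - ⟪T u, T w⟫ = θ₁ * ⟪u, w⟫ + θ * ⟪u₁, w⟫)
    (huu₁ : ⟪u, u₁⟫ = 0) :
    0 ≤ ⟪T u, T u₁⟫ ∧ ⟪T u, T u₁⟫ ≤ cE ^ 2 * ‖T u‖ ^ 2 / cg := by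
  have hlow : cg * ‖u₁‖ ^ 2 ≤ ⟪T u, T u₁⟫ := by
    have h₁ := heig₁ u₁
    have h₂ := hgap u₁ (by rwa [real_inner_comm])
    rw [huu₁, real_inner_self_eq_norm_sq] at h₁
    linarith
  have hup : ⟪T u, T u₁⟫ ≤ cE * ‖T u‖ * ‖u₁‖ :=
    calc ⟪T u, T u₁⟫ ≤ ‖T u‖ * ‖T u₁‖ := real_inner_le_norm _ _
      _ ≤ ‖T u‖ * (cE * ‖u₁‖) :=
        mul_le_mul_of_nonneg_left (T.le_of_opNorm_le hT u₁) (norm_nonneg _)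
      _ = cE * ‖T u‖ * ‖u₁‖ := by ring
  refine ⟨le_trans (by positivity) hlow, ?_⟩
  rw [← mul_pow]
  exact le_sq_div_of_mul_sq_le_of_le_mul hcg hlow hup

theorem inner_deriv_le_mul_norm_sq {VI : Submodule ℝ V} {T₁ : W →L[ℝ] V} {α ρ₀ cE cg : ℝ}
    (hcoer : ∀ w ∈ VI, a w w ≥ α * ‖w‖ ^ 2) (hσ : σ ≤ ρ₀) (hρ₀ : ρ₀ < α) (hT₁u : T₁ u ∈ VI)
    (hext₁ : shiftedForm a σ (T₁ u) (T₁ u) = ⟪T u, T₁ u⟫) (hcg : 0 < cg) (hT : ‖T‖ ≤ cE)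
    (hgap : ∀ w, ⟪w, u⟫ = 0 →
      shiftedForm a σ (T w) (T w) - θ * ‖w‖ ^ 2 ≥ cg * ‖w‖ ^ 2)
    (heig₁ : ∀ w, shiftedForm a σ (T u₁) (T w) - ⟪T u, T w⟫ = θ₁ * ⟪u, w⟫ + θ * ⟪u₁, w⟫)
    (huu₁ : ⟪u, u₁⟫ = 0) :
    0 ≤ ⟪T u, T₁ u + T u₁⟫ ∧ ⟪T u, T₁ u + T u₁⟫ ≤ (1 / (α - ρ₀) + cE ^ 2 / cg) * ‖T u‖ ^ 2 := by
  obtain ⟨hA₀, hA⟩ := inner_le_of_shiftedForm_self_eq hcoer (hσ.trans_lt hρ₀) hT₁u hext₁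
  obtain ⟨hB₀, hB⟩ := inner_le_of_spectral_gap hcg hT hgap heig₁ huu₁
  have hA' : ‖T u‖ ^ 2 / (α - σ) ≤ ‖T u‖ ^ 2 / (α - ρ₀) :=
    div_le_div_of_nonneg_left (by positivity) (sub_pos.2 hρ₀) (by linarith)
  rw [inner_add_right, add_mul, one_div_mul_eq_div, div_mul_eq_mul_div]
  exact ⟨add_nonneg hA₀ hB₀, add_le_add (hA.trans hA') hB⟩

end Eigenpair

theorem stmt11_general
    {V : Type*} [NormedAddCommGroup V] [InnerProductSpace ℝ V]
    {WΓ : Type*} [NormedAddCommGroup WΓ] [InnerProductSpace ℝ WΓ]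
    (a : V →L[ℝ] V →L[ℝ] ℝ)
    (hsymm : ∀ v w : V, a v w = a w v)
    (VI : Submodule ℝ V) (hVI : IsClosed (VI : Set V))
    (α : ℝ)
    (hcoer : ∀ w ∈ VI, a w w ≥ α * ‖w‖ ^ 2)
    (E : ℝ → (WΓ →L[ℝ] V))
    (hext : ∀ σ, σ < α → ∀ u : WΓ, ∀ w ∈ VI, a (E σ u) w - σ * ⟪E σ u, w⟫ = 0)
    (hdiffVI : ∀ σ₁ σ₂, σ₁ < α → σ₂ < α → ∀ u : WΓ, E σ₁ u - E σ₂ u ∈ VI)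
    (cE : ℝ) (hcE : ∀ σ, σ < α → ‖E σ‖ ≤ cE)
    (lam ρ₀ : ℝ) (h₂ : ρ₀ < α)
    -- an open neighborhood of [λ, ρ₀] on which everything is smooth
    (U : Set ℝ) (hU : IsOpen U) (hUIcc : Set.Icc lam ρ₀ ⊆ U)
    (E' : ℝ → (WΓ →L[ℝ] V))
    (hE' : ∀ σ ∈ U, HasDerivAt E (E' σ) σ)
    (θ θ' : ℝ → ℝ) (u u' : ℝ → WΓ)
    (hθ' : ∀ σ ∈ U, HasDerivAt θ (θ' σ) σ)
    (hu' : ∀ σ ∈ U, HasDerivAt u (u' σ) σ)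
    (hnorm : ∀ σ ∈ U, ‖u σ‖ = 1)
    (hEu : ∀ σ ∈ U, E σ (u σ) ≠ 0)
    (heig : ∀ σ ∈ U, ∀ w : WΓ,
      a (E σ (u σ)) (E σ w) - σ * ⟪E σ (u σ), E σ w⟫ = θ σ * ⟪u σ, w⟫)
    (hθlam : θ lam = 0)
    (cg : ℝ) (hcg : 0 < cg)
    (hgap : ∀ σ ∈ Set.Icc lam ρ₀, ∀ w : WΓ, ⟪w, u σ⟫ = 0 →
      a (E σ w) (E σ w) - σ * ⟪E σ w, E σ w⟫ - θ σ * ‖w‖ ^ 2 ≥ cg * ‖w‖ ^ 2)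
    (ρ : ℝ) (hρ₁ : lam < ρ) (hρ₂ : ρ ≤ ρ₀) :
    (ρ - θ ρ / θ' ρ) - lam ≤ (1 / (α - ρ₀) + cE ^ 2 / cg) * (ρ - lam) ^ 2 := by
  have hmem : ∀ σ ∈ Icc lam ρ, σ ∈ U ∧ σ < α := fun σ hσ =>
    ⟨hUIcc ⟨hσ.1, hσ.2.trans hρ₂⟩, hσ.2.trans_lt (hρ₂.trans_lt h₂)⟩
  have huu' : ∀ σ ∈ U, ⟪u σ, u' σ⟫ = 0 := fun σ hσ =>
    (hu' σ hσ).inner_eq_zero_of_norm_eventually_eq (eventually_of_mem (hU.mem_nhds hσ) hnorm)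
  have hE'VI : ∀ σ ∈ U, σ < α → ∀ z, E' σ z ∈ VI := fun σ hσ hσα =>
    (hE' σ hσ).apply_mem_of_eventually_sub_mem hVI
      (eventually_of_mem (Iio_mem_nhds hσα) fun t ht => hdiffVI t σ ht hσα)
  have heig' : ∀ σ ∈ U, σ < α → ∀ w, shiftedForm a σ (E σ (u' σ)) (E σ w) - ⟪E σ (u σ), E σ w⟫
      = θ' σ * ⟪u σ, w⟫ + θ σ * ⟪u' σ, w⟫ := fun σ hσ hσα =>
    shiftedForm_eigenvector_deriv hsymm (hE' σ hσ) (hu' σ hσ) (hθ' σ hσ) (hext σ hσα)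
      (hE'VI σ hσ hσα) (eventually_of_mem (hU.mem_nhds hσ) heig)
  have hθ'eq : ∀ σ ∈ U, σ < α → θ' σ = -‖E σ (u σ)‖ ^ 2 := fun σ hσ hσα =>
    eigenvalue_deriv_eq_neg_norm_sq hsymm (heig σ hσ) (heig' σ hσ hσα) (hnorm σ hσ) (huu' σ hσ)
  refine newton_step_sub_root_le_of_deriv_eq_neg hρ₁.le
    (add_nonneg (one_div_nonneg.2 (sub_pos.2 h₂).le) (div_nonneg (sq_nonneg cE) hcg.le))
    (fun σ hσ => hθ' σ (hmem σ hσ).1)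
    (fun σ hσ => Eventually.mono (inter_mem (hU.mem_nhds (hmem σ hσ).1)
      (Iio_mem_nhds (hmem σ hσ).2)) fun t ht => hθ'eq t ht.1 ht.2)
    (fun σ hσ => ((hE' σ (hmem σ hσ).1).clm_apply (hu' σ (hmem σ hσ).1)).norm_sq)
    (fun σ hσ => ?_) hθlam (pow_pos (norm_pos_iff.2 (hEu ρ (hmem ρ ⟨hρ₁.le, le_rfl⟩).1)) 2)
  obtain ⟨hσU, hσα⟩ := hmem σ hσ
  exact inner_deriv_le_mul_norm_sq hcoer (hσ.2.trans hρ₂) h₂ (hE'VI σ hσU hσα (u σ))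
    (shiftedForm_extension_deriv (hE' σ hσU) (eventually_of_mem (Iio_mem_nhds hσα) hext) _
      (hE'VI σ hσU hσα (u σ)))
    hcg (hcE σ hσα) (hgap σ ⟨hσ.1, hσ.2.trans hρ₂⟩) (heig' σ hσU hσα) (huu' σ hσU)

/-- Main quadratic-convergence theorem for the Newton–Schur method: under uniform
boundedness of the extensions, twice continuous differentiability of the extension,
eigenvalue and eigenvector families on a neighborhood of [λ, ρ₀], normalization,
minimality, θ(λ) = 0, and a uniform spectral gap c_g, the Newton iterate from any
ρ ∈ (λ, ρ₀] satisfies ρ_N − λ ≤ (1/(α − ρ₀) + c_E²/c_g)·(ρ − λ)². -/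
theorem stmt11
    {V : Type*} [NormedAddCommGroup V] [InnerProductSpace ℝ V] [CompleteSpace V]
    {WΓ : Type*} [NormedAddCommGroup WΓ] [InnerProductSpace ℝ WΓ] [CompleteSpace WΓ]
    (a : V →L[ℝ] V →L[ℝ] ℝ)
    (hsymm : ∀ v w : V, a v w = a w v)
    (VI : Submodule ℝ V) (hVI : IsClosed (VI : Set V))
    (α : ℝ) (hα : 0 < α)
    (hcoer : ∀ w ∈ VI, a w w ≥ α * ‖w‖ ^ 2)
    (E : ℝ → (WΓ →L[ℝ] V))
    (hext : ∀ σ, σ < α → ∀ u : WΓ, ∀ w ∈ VI, a (E σ u) w - σ * ⟪E σ u, w⟫ = 0)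
    (hdiffVI : ∀ σ₁ σ₂, σ₁ < α → σ₂ < α → ∀ u : WΓ, E σ₁ u - E σ₂ u ∈ VI)
    (cE : ℝ) (hcE : ∀ σ, σ < α → ‖E σ‖ ≤ cE)
    (lam ρ₀ : ℝ) (h₁ : lam < ρ₀) (h₂ : ρ₀ < α)
    -- an open neighborhood of [λ, ρ₀] on which everything is smooth
    (U : Set ℝ) (hU : IsOpen U) (hUIcc : Set.Icc lam ρ₀ ⊆ U)
    (E' E'' : ℝ → (WΓ →L[ℝ] V))
    (hE' : ∀ σ ∈ U, HasDerivAt E (E' σ) σ)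
    (hE'' : ∀ σ ∈ U, HasDerivAt E' (E'' σ) σ)
    (hE''cont : ContinuousOn E'' U)
    (θ θ' θ'' : ℝ → ℝ) (u u' u'' : ℝ → WΓ)
    (hθ' : ∀ σ ∈ U, HasDerivAt θ (θ' σ) σ)
    (hθ'' : ∀ σ ∈ U, HasDerivAt θ' (θ'' σ) σ)
    (hθ''cont : ContinuousOn θ'' U)
    (hu' : ∀ σ ∈ U, HasDerivAt u (u' σ) σ)
    (hu'' : ∀ σ ∈ U, HasDerivAt u' (u'' σ) σ)
    (hu''cont : ContinuousOn u'' U)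
    (hnorm : ∀ σ ∈ U, ‖u σ‖ = 1)
    (hEu : ∀ σ ∈ U, E σ (u σ) ≠ 0)
    (heig : ∀ σ ∈ U, ∀ w : WΓ,
      a (E σ (u σ)) (E σ w) - σ * ⟪E σ (u σ), E σ w⟫ = θ σ * ⟪u σ, w⟫)
    (hmin : ∀ σ ∈ U, ∀ w : WΓ,
      a (E σ w) (E σ w) - σ * ⟪E σ w, E σ w⟫ ≥ θ σ * ‖w‖ ^ 2)
    (hθlam : θ lam = 0)
    (cg : ℝ) (hcg : 0 < cg)
    (hgap : ∀ σ ∈ Set.Icc lam ρ₀, ∀ w : WΓ, ⟪w, u σ⟫ = 0 →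
      a (E σ w) (E σ w) - σ * ⟪E σ w, E σ w⟫ - θ σ * ‖w‖ ^ 2 ≥ cg * ‖w‖ ^ 2)
    (ρ : ℝ) (hρ₁ : lam < ρ) (hρ₂ : ρ ≤ ρ₀) :
    (ρ - θ ρ / θ' ρ) - lam ≤ (1 / (α - ρ₀) + cE ^ 2 / cg) * (ρ - lam) ^ 2 :=
  stmt11_general a hsymm VI hVI α hcoer E hext hdiffVI cE hcE lam ρ₀ h₂ U hU hUIcc E' hE' θ θ' u u'
    hθ' hu' hnorm hEu heig hθlam cg hcg hgap ρ hρ₁ hρ₂
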